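/- arXiv:1111.7100 — 5 statements merged into one kernel-verified Lean document; each statement's English description precedes it below -/
import Mathlib

section
/- Let φ ∈ SO(3) with φ ≠ id and suppose p¹, p², p³, p⁴ ∈ ℝ³ satisfy (φ p⁽ⁱ⁾)_j = p⁽ⁱ⁾_j for i = 1,...,4 and j = 1,2. Then the points p¹, p², p³, p⁴ are affinely dependent, i.e., the determinant of the 4×4 matrix with columns (1, p⁽ⁱ⁾₁, p⁽ⁱ⁾₂, p⁽ⁱ⁾₃)ᵀ vanishes. -/
/-- If φ ∈ SO(3), φ ≠ id, and the first two coordinates of each of the four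
points p⁽ⁱ⁾ are fixed by φ, then the four points are affinely dependent: the determinant
of the 4×4 matrix with columns (1, p⁽ⁱ⁾) vanishes. -/
theorem stmt2 (φ : Matrix (Fin 3) (Fin 3) ℝ) (hO : φ.transpose * φ = 1) (hdet : φ.det = 1)
    (hne : φ ≠ 1) (p : Fin 4 → (Fin 3 → ℝ))
    (hproj : ∀ i : Fin 4, φ.mulVec (p i) 0 = p i 0 ∧ φ.mulVec (p i) 1 = p i 1) :
    Matrix.det !![1, 1, 1, 1;
                  p 0 0, p 1 0, p 2 0, p 3 0;
                  p 0 1, p 1 1, p 2 1, p 3 1;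
                  p 0 2, p 1 2, p 2 2, p 3 2] = 0 := by
  set M : Matrix (Fin 4) (Fin 4) ℝ :=
    !![1, 1, 1, 1;
       p 0 0, p 1 0, p 2 0, p 3 0;
       p 0 1, p 1 1, p 2 1, p 3 1;
       p 0 2, p 1 2, p 2 2, p 3 2] with hM
  rw [← Matrix.exists_vecMul_eq_zero_iff]
  have key : ∀ r : Fin 3, (∀ i : Fin 4, φ.mulVec (p i) r = p i r) →
      (φ r ≠ fun j => (1 : Matrix (Fin 3) (Fin 3) ℝ) r j) →
      ∃ v, v ≠ 0 ∧ Matrix.vecMul v M = 0 := by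
    intro r hr hne'
    refine ⟨![0, φ r 0 - (1:Matrix (Fin 3) (Fin 3) ℝ) r 0,
              φ r 1 - (1:Matrix (Fin 3) (Fin 3) ℝ) r 1,
              φ r 2 - (1:Matrix (Fin 3) (Fin 3) ℝ) r 2], ?_, ?_⟩
    · intro h
      apply hne'
      have h1 := congrFun h 1
      have h2 := congrFun h 2
      have h3 := congrFun h 3
      simp [sub_eq_zero] at h1 h2 h3
      funext j
      fin_cases j <;> assumption
    · have hr' : ∀ i : Fin 4,
          φ r 0 * p i 0 + φ r 1 * p i 1 + φ r 2 * p i 2 = p i r := by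
        intro i
        have := hr i
        simpa [Matrix.mulVec, dotProduct, Fin.sum_univ_three] using this
      funext j
      fin_cases j <;>
      · simp only [hM, Matrix.vecMul, dotProduct, Fin.sum_univ_four,
          Matrix.cons_val', Matrix.cons_val_zero, Matrix.cons_val_one, Matrix.head_cons,
          Matrix.empty_val', Matrix.cons_val_fin_one, Matrix.head_fin_const,
          Matrix.cons_val_two, Matrix.cons_val_three, Matrix.tail_cons, Pi.zero_apply]
        fin_cases r <;>
          simp_all [Matrix.one_apply] <;> ring_nf <;> linarith [hr' 0, hr' 1, hr' 2, hr' 3]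
  by_cases h0 : φ 0 = fun j => (1 : Matrix (Fin 3) (Fin 3) ℝ) 0 j
  · by_cases h1 : φ 1 = fun j => (1 : Matrix (Fin 3) (Fin 3) ℝ) 1 j
    · exfalso
      apply hne
      -- rows 0 and 1 of φ are e₀ and e₁; orthogonality forces row 2 = e₂
      have e00 : φ 0 0 = 1 := by have := congrFun h0 0; simpa [Matrix.one_apply] using this
      have e01 : φ 0 1 = 0 := by have := congrFun h0 1; simpa [Matrix.one_apply] using this
      have e02 : φ 0 2 = 0 := by have := congrFun h0 2; simpa [Matrix.one_apply] using this
      have e10 : φ 1 0 = 0 := by have := congrFun h1 0; simpa [Matrix.one_apply] using this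
      have e11 : φ 1 1 = 1 := by have := congrFun h1 1; simpa [Matrix.one_apply] using this
      have e12 : φ 1 2 = 0 := by have := congrFun h1 2; simpa [Matrix.one_apply] using this
      have hc0 : φ 0 0 * φ 0 0 + φ 1 0 * φ 1 0 + φ 2 0 * φ 2 0 = 1 := by
        have := congrFun (congrFun hO 0) 0
        simpa [Matrix.mul_apply, Matrix.transpose_apply, Fin.sum_univ_three,
          Matrix.one_apply] using this
      have hc1 : φ 0 1 * φ 0 1 + φ 1 1 * φ 1 1 + φ 2 1 * φ 2 1 = 1 := by
        have := congrFun (congrFun hO 1) 1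
        simpa [Matrix.mul_apply, Matrix.transpose_apply, Fin.sum_univ_three,
          Matrix.one_apply] using this
      have e20 : φ 2 0 = 0 := by nlinarith [sq_nonneg (φ 2 0)]
      have e21 : φ 2 1 = 0 := by nlinarith [sq_nonneg (φ 2 1)]
      have e22 : φ 2 2 = 1 := by
        rw [Matrix.det_fin_three] at hdet
        rw [e00, e01, e02, e10, e11, e12, e20, e21] at hdet
        linarith
      funext i j
      fin_cases i <;> fin_cases j <;>
        simp [Matrix.one_apply, e00, e01, e02, e10, e11, e12, e20, e21, e22]
    · exact key 1 (fun i => (hproj i).2) h1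
  · exact key 0 (fun i => (hproj i).1) h0
end

section
/- Let a, b, c, d ∈ ℝ with a²+b²+c²+d² = 1, let A be the 2×3 matrix [[a²+b²−c²−d², 2bc−2ad, 2bd+2ac], [2bc+2ad, a²−b²+c²−d², 2cd−2ab]] and I the 2×3 matrix [[1,0,0],[0,1,0]]. Let M₁ be the 6×9 block matrix [[A, −I, 0], [−I, A, 0], [0, 0, A−I]]. If a ≠ 0 and d ≠ 0, then M₁ has rank 6. -/
/-!
Keeping the first two columns of each column block of `M₁` leaves a `6 × 6` matrix which, after
regrouping rows and columns, is block diagonal with blocks `[[X, -1], [-1, X]]` and `X - 1`, where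
`X` is the upper-left `2 × 2` block of the rotation matrix. Conjugating `[[X, -1], [-1, X]]`
by `[[1, 1], [1, -1]]` splits it into `X - 1` and `X + 1`, so the minor is
`det (X - 1) ^ 2 * det (X + 1)`.
For a `2 × 2` matrix `det (X ∓ 1) = det X ∓ tr X + 1`, and here `det X = a² + d² - b² - c²` (the
`(3, 3)` cofactor of a rotation) and `tr X = 2 (a² - d²)`, so `det (X - 1) = 4 d²` and
`det (X + 1) = 4 a²`. The minor is therefore nonzero when `a ≠ 0` and `d ≠ 0`.
-/

/-- Assemble a 3×3 array of 2×3 blocks into a 6×9 matrix. -/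
def blockMat (B : Fin 3 → Fin 3 → Matrix (Fin 2) (Fin 3) ℝ) : Matrix (Fin 6) (Fin 9) ℝ :=
  Matrix.of fun i j =>
    B ⟨i.val / 2, by have := i.isLt; omega⟩ ⟨j.val / 3, by have := j.isLt; omega⟩
      ⟨i.val % 2, by omega⟩ ⟨j.val % 3, by omega⟩

open Matrix

namespace Matrix

theorem rank_eq_card_of_det_submatrix_ne_zero {m n K : Type*} [Fintype m] [Fintype n]
    [DecidableEq m] [Field K] (A : Matrix m n K) (c : m → n) (h : (A.submatrix id c).det ≠ 0) :
    A.rank = Fintype.card m := by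
  refine le_antisymm A.rank_le_card_height ?_
  calc Fintype.card m = (A.submatrix id c).rank :=
        (rank_of_isUnit _ ((isUnit_iff_isUnit_det _).mpr h.isUnit)).symm
    _ ≤ A.rank := rank_submatrix_le A id c

theorem det_fromBlocks_neg_one_self {n K : Type*} [Fintype n] [DecidableEq n] [Field K]
    (h2 : (2 : K) ≠ 0) (X : Matrix n n K) :
    (fromBlocks X (-1) (-1) X).det = (X - 1).det * (X + 1).det := by
  have hQ : (fromBlocks 1 1 1 (-1) : Matrix (n ⊕ n) (n ⊕ n) K).det = (-2) ^ Fintype.card n := by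
    rw [det_fromBlocks_one₁₁, mul_one,
      show (-1 - 1 : Matrix n n K) = (-2 : K) • 1 by rw [neg_smul, two_smul]; abel,
      det_smul, det_one, mul_one]
  have hL : (fromBlocks 1 0 (-1) 1 : Matrix (n ⊕ n) (n ⊕ n) K).det = 1 := by
    rw [det_fromBlocks_zero₁₂, det_one, one_mul]
  have hprod : fromBlocks 1 0 (-1) 1 * fromBlocks X (-1) (-1) X * fromBlocks 1 1 1 (-1) =
      fromBlocks (X - 1) (X + 1) 0 ((-2 : K) • (X + 1)) := by
    simp only [fromBlocks_multiply, Matrix.one_mul, Matrix.mul_one, Matrix.zero_mul,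
      Matrix.mul_neg, Matrix.neg_mul]
    congr 1 <;> module
  have hdet := congrArg det hprod
  rw [det_mul, det_mul, hL, hQ, det_fromBlocks_zero₂₁, det_smul] at hdet
  apply mul_right_cancel₀ (pow_ne_zero (Fintype.card n) (neg_ne_zero.mpr h2))
  linear_combination hdet

theorem det_fin_two_sub_one {R : Type*} [CommRing R] (X : Matrix (Fin 2) (Fin 2) R) :
    (X - 1).det = X.det - X.trace + 1 := by
  simp only [det_fin_two, trace_fin_two, sub_apply, one_apply_eq, one_apply_ne, ne_eq,
    zero_ne_one, one_ne_zero, not_false_eq_true, sub_zero]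
  ring

theorem det_fin_two_add_one {R : Type*} [CommRing R] (X : Matrix (Fin 2) (Fin 2) R) :
    (X + 1).det = X.det + X.trace + 1 := by
  simp only [det_fin_two, trace_fin_two, add_apply, one_apply_eq, one_apply_ne, ne_eq,
    zero_ne_one, one_ne_zero, not_false_eq_true, add_zero]
  ring

end Matrix

/-- The upper-left `2 × 2` block of the rotation matrix of the quaternion `a + b i + c j + d k`. -/
def quatRotBlock (a b c d : ℝ) : Matrix (Fin 2) (Fin 2) ℝ :=
  !![a^2 + b^2 - c^2 - d^2, 2*b*c - 2*a*d; 2*b*c + 2*a*d, a^2 - b^2 + c^2 - d^2]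

section QuatRotBlock

variable {a b c d : ℝ}

theorem det_quatRotBlock (h : a^2 + b^2 + c^2 + d^2 = 1) :
    (quatRotBlock a b c d).det = a^2 + d^2 - b^2 - c^2 := by
  rw [quatRotBlock, det_fin_two_of]
  linear_combination (a^2 + d^2 - b^2 - c^2) * h

theorem trace_quatRotBlock : (quatRotBlock a b c d).trace = 2 * (a^2 - d^2) := by
  rw [quatRotBlock, trace_fin_two_of]
  ring

theorem det_quatRotBlock_sub_one (h : a^2 + b^2 + c^2 + d^2 = 1) :
    (quatRotBlock a b c d - 1).det = 4 * d^2 := by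
  rw [det_fin_two_sub_one, det_quatRotBlock h, trace_quatRotBlock]
  linear_combination -h

theorem det_quatRotBlock_add_one (h : a^2 + b^2 + c^2 + d^2 = 1) :
    (quatRotBlock a b c d + 1).det = 4 * a^2 := by
  rw [det_fin_two_add_one, det_quatRotBlock h, trace_quatRotBlock]
  linear_combination -h

end QuatRotBlock

theorem blockMat_submatrix_eq_fromBlocks (A : Matrix (Fin 2) (Fin 3) ℝ) :
    let P : Matrix (Fin 2) (Fin 3) ℝ := !![1, 0, 0; 0, 1, 0]
    let X := A.submatrix id Fin.castSucc
    let e : Fin 6 ≃ (Fin 2 ⊕ Fin 2) ⊕ Fin 2 :=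
      (finSumFinEquiv (m := 4) (n := 2)).symm.trans
        (Equiv.sumCongr (finSumFinEquiv (m := 2) (n := 2)).symm (Equiv.refl _))
    (blockMat ![![A, -P, 0], ![-P, A, 0], ![0, 0, A - P]]).submatrix id ![0, 1, 3, 4, 6, 7] =
      (fromBlocks (fromBlocks X (-1) (-1) X) 0 0 (X - 1)).submatrix e e := by
  intro P X e
  ext i j
  fin_cases i <;> fin_cases j <;> rfl

/-- The coefficient matrix M₁ = [[A,−I,0],[−I,A,0],[0,0,A−I]] for the
one-two-cycle case has rank 6 whenever a ≠ 0 and d ≠ 0. -/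
theorem stmt10 (a b c d : ℝ) (h : a^2 + b^2 + c^2 + d^2 = 1) (ha : a ≠ 0) (hd : d ≠ 0) :
    let A : Matrix (Fin 2) (Fin 3) ℝ :=
      !![a^2 + b^2 - c^2 - d^2, 2*b*c - 2*a*d, 2*b*d + 2*a*c;
         2*b*c + 2*a*d, a^2 - b^2 + c^2 - d^2, 2*c*d - 2*a*b]
    let I : Matrix (Fin 2) (Fin 3) ℝ := !![1, 0, 0; 0, 1, 0]
    let M₁ := blockMat ![![A, -I, 0], ![-I, A, 0], ![0, 0, A - I]]
    M₁.rank = 6 := by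
  intro A I M₁
  have hX : A.submatrix id Fin.castSucc = quatRotBlock a b c d := by
    ext i j
    fin_cases i <;> fin_cases j <;> rfl
  refine (M₁.rank_eq_card_of_det_submatrix_ne_zero ![0, 1, 3, 4, 6, 7] ?_).trans
    (Fintype.card_fin 6)
  rw [blockMat_submatrix_eq_fromBlocks A, det_submatrix_equiv_self, det_fromBlocks_zero₂₁, hX,
    det_fromBlocks_neg_one_self two_ne_zero, det_quatRotBlock_sub_one h,
    det_quatRotBlock_add_one h]
  simp [ha, hd]
end

section
/- Let a, b, c, d ∈ ℝ with a²+b²+c²+d² = 1, A and I the 2×3 matrices as in the quaternion block construction, and M₂ the 6×9 block matrix [[A, −I, 0], [−I, A, 0], [I, I, A+I]]. If a = 0 and d = 1 (so b = c = 0, the rotation by π about the z-axis), then M₂ has rank 2, hence null space of dimension 7. -/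
set_option maxHeartbeats 1000000 in
/-- For the rotation by π about the z-axis (a = 0, b = c = 0, d = 1), the
coefficient matrix M₂ = [[A,−I,0],[−I,A,0],[I,I,A+I]] of the double-transposition case
has rank 2, hence null space of dimension 7. -/
theorem stmt12 (a b c d : ℝ) (h : a^2 + b^2 + c^2 + d^2 = 1)
    (ha : a = 0) (hd : d = 1) :
    let A : Matrix (Fin 2) (Fin 3) ℝ :=
      !![a^2 + b^2 - c^2 - d^2, 2*b*c - 2*a*d, 2*b*d + 2*a*c;
         2*b*c + 2*a*d, a^2 - b^2 + c^2 - d^2, 2*c*d - 2*a*b]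
    let I : Matrix (Fin 2) (Fin 3) ℝ := !![1, 0, 0; 0, 1, 0]
    let M₂ := blockMat ![![A, -I, 0], ![-I, A, 0], ![I, I, A + I]]
    M₂.rank = 2 ∧ Module.finrank ℝ (LinearMap.ker M₂.mulVecLin) = 7 := by
  have hb : b = 0 := by nlinarith [sq_nonneg b, sq_nonneg c]
  have hc : c = 0 := by nlinarith [sq_nonneg b, sq_nonneg c]
  subst ha hb hc hd
  intro A I M₂
  -- factorization M₂ = C * R
  have hfact : M₂ =
      (!![-1,0; 0,-1; -1,0; 0,-1; 1,0; 0,1] : Matrix (Fin 6) (Fin 2) ℝ) *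
      (!![1,0,0,1,0,0,0,0,0; 0,1,0,0,1,0,0,0,0] : Matrix (Fin 2) (Fin 9) ℝ) := by
    ext ⟨i, hi⟩ ⟨j, hj⟩
    interval_cases i <;> interval_cases j <;>
      norm_num [M₂, blockMat, A, I, Matrix.mul_apply, Fin.sum_univ_succ]
  set C : Matrix (Fin 6) (Fin 2) ℝ := !![-1,0; 0,-1; -1,0; 0,-1; 1,0; 0,1] with hC
  set R : Matrix (Fin 2) (Fin 9) ℝ :=
    !![1,0,0,1,0,0,0,0,0; 0,1,0,0,1,0,0,0,0] with hR
  -- row/column pickers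
  set Q : Matrix (Fin 2) (Fin 6) ℝ := !![1,0,0,0,0,0; 0,1,0,0,0,0] with hQ
  set P : Matrix (Fin 9) (Fin 2) ℝ :=
    !![1,0; 0,1; 0,0; 0,0; 0,0; 0,0; 0,0; 0,0; 0,0] with hP
  have hQC : Q * C = (-1 : Matrix (Fin 2) (Fin 2) ℝ) := by
    ext ⟨i, hi⟩ ⟨j, hj⟩
    interval_cases i <;> interval_cases j <;>
      norm_num [hQ, hC, Matrix.mul_apply, Fin.sum_univ_succ]
  have hRP : R * P = (1 : Matrix (Fin 2) (Fin 2) ℝ) := by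
    ext ⟨i, hi⟩ ⟨j, hj⟩
    interval_cases i <;> interval_cases j <;>
      norm_num [hR, hP, Matrix.mul_apply, Fin.sum_univ_succ, Matrix.one_apply]
  have hsub : Q * (M₂ * P) = (-1 : Matrix (Fin 2) (Fin 2) ℝ) := by
    rw [hfact, Matrix.mul_assoc C R P, hRP, Matrix.mul_one, hQC]
  have hneg1 : ((-1 : Matrix (Fin 2) (Fin 2) ℝ)).rank = 2 := by
    rw [Matrix.rank_of_isUnit]
    · simp
    · rw [Matrix.isUnit_iff_isUnit_det]
      simp [Matrix.det_neg]
  have hle : M₂.rank ≤ 2 := by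
    rw [hfact]
    calc (C * R).rank ≤ C.rank := Matrix.rank_mul_le_left C R
      _ ≤ Fintype.card (Fin 2) := Matrix.rank_le_card_width C
      _ = 2 := by simp
  have hge : 2 ≤ M₂.rank := by
    calc (2 : ℕ) = (Q * (M₂ * P)).rank := by rw [hsub, hneg1]
      _ ≤ (M₂ * P).rank := Matrix.rank_mul_le_right Q (M₂ * P)
      _ ≤ M₂.rank := Matrix.rank_mul_le_left M₂ P
  have hrank : M₂.rank = 2 := le_antisymm hle hge
  refine ⟨hrank, ?_⟩
  have h9 := LinearMap.finrank_range_add_finrank_ker M₂.mulVecLin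
  rw [show Module.finrank ℝ (LinearMap.range M₂.mulVecLin) = M₂.rank from rfl, hrank] at h9
  simp only [Module.finrank_pi, Fintype.card_fin] at h9
  omega
end

section
/- Let φ be the rotation of ℝ³ with matrix [[3/4, −√(3/8), 1/4], [√(3/8), 1/2, −√(3/8)], [1/4, √(3/8), 3/4]] (rotation by π/3 about the axis (1/√2, 0, 1/√2)). Let p¹ = (−2, −3+√6, 16−3√6), p² = (1, 3−4√6, −19+3√6), p³ = (2, −3+3√6, 8−3√6), p⁴ = (−1, 3, −5+3√6). Then p¹, p², p³, p⁴ are affinely independent, and π_z φ p¹ = π_z p², π_z φ p² = π_z p³, π_z φ p³ = π_z p⁴, π_z φ p⁴ = π_z p¹. -/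
/-! Since √(3/8) = √6/4, all data lie in ℚ(√6): every claim, including the non-vanishing of the
edge-vector determinant, reduces to arithmetic in √6 modulo √6² = 6. -/

theorem affineIndependent_iff_det_vsub_ne_zero {K : Type*} [Field K] {n : ℕ}
    (p : Fin (n + 1) → Fin n → K) :
    AffineIndependent K p ↔ (Matrix.of fun i => p i.succ - p 0).det ≠ 0 := by
  rw [affineIndependent_iff_linearIndependent_vsub K p 0,
    ← linearIndependent_equiv (finSuccAboveEquiv 0), ← isUnit_iff_ne_zero,
    ← Matrix.isUnit_iff_isUnit_det, ← Matrix.linearIndependent_rows_iff_isUnit]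
  rfl

theorem Real.sqrt_three_div_eight : √(3 / 8) = √6 / 4 := by
  rw [show (3 : ℝ) / 8 = 6 / 4 ^ 2 by norm_num, Real.sqrt_div' _ (by positivity),
    Real.sqrt_sq (by norm_num)]

/-- An explicit full-dimensional tetrahedron realizing the four-cycle
case: with φ the rotation by π/3 about the axis (1/√2, 0, 1/√2), the given points are
affinely independent and satisfy π_z φ p⁽ⁱ⁾ = π_z p⁽ⁱ⁺¹⁾ (indices mod 4). -/
theorem stmt15 :
    let φ : Matrix (Fin 3) (Fin 3) ℝ :=
      !![3/4, -Real.sqrt (3/8), 1/4;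
         Real.sqrt (3/8), 1/2, -Real.sqrt (3/8);
         1/4, Real.sqrt (3/8), 3/4]
    let s := Real.sqrt 6
    let p : Fin 4 → (Fin 3 → ℝ) :=
      ![![-2, -3 + s, 16 - 3*s],
        ![1, 3 - 4*s, -19 + 3*s],
        ![2, -3 + 3*s, 8 - 3*s],
        ![-1, 3, -5 + 3*s]]
    let πz : (Fin 3 → ℝ) → (Fin 2 → ℝ) := fun x => ![x 0, x 1]
    AffineIndependent ℝ p ∧
    πz (φ.mulVec (p 0)) = πz (p 1) ∧
    πz (φ.mulVec (p 1)) = πz (p 2) ∧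
    πz (φ.mulVec (p 2)) = πz (p 3) ∧
    πz (φ.mulVec (p 3)) = πz (p 0) := by
  intro φ s p πz
  have hs : s ^ 2 = 6 := Real.sq_sqrt (by norm_num)
  have hφ : φ = !![3/4, -(s/4), 1/4; s/4, 1/2, -(s/4); 1/4, s/4, 3/4] := by
    simp only [φ, s, Real.sqrt_three_div_eight]
  refine ⟨(affineIndependent_iff_det_vsub_ne_zero p).2 ?_, ?_, ?_, ?_, ?_⟩
  · have hdet : (Matrix.of fun i => p i.succ - p 0).det = 480 - 320 * s := by
      simp [Matrix.det_fin_three, p]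
      linear_combination 120 * hs
    have hs' : s ≠ 3 / 2 := by
      intro h
      norm_num [h] at hs
    rw [hdet]
    contrapose! hs'
    linarith
  all_goals
    ext j
    fin_cases j <;> simp [πz, hφ, p] <;> linarith
end

section
/- Let p¹ = (1,0,0), p² = (1,1,0), p³ = (2,1,2), p⁴ = (4,−2,−2). Then for any φ ∈ SO(3) and any permutation σ of {1,2,3,4} satisfying π_z φ p⁽ⁱ⁾ = π_z p⁽σ(i)⁾ for all i, the permutation σ must be the identity. Consequently (since the points are affinely independent), φ = id. -/
/-!
A rotation preserves `‖p⁽ⁱ⁾‖² = 1, 2, 9, 24` and the projection `π_z` does not increase it, so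
`π_z p⁽σ(i)⁾ = π_z φ p⁽ⁱ⁾` forces `‖π_z p⁽σ(i)⁾‖² ∈ {1, 2, 5, 20}` to be at most `‖p⁽ⁱ⁾‖²`, i.e.
`σ(i) ≤ i` for every `i`; a permutation moving no index up is the identity. Then `φ` and `1`
have the same first two rows on the spanning vectors `p¹, p², p³`, and the last row of a matrix
in `SO(3)` is the cross product of the first two.
-/

open Matrix

theorem Matrix.mulVec_dotProduct_mulVec_self {n R : Type*} [Fintype n] [DecidableEq n]
    [CommRing R] {A : Matrix n n R} (hA : Aᵀ * A = 1) (v : n → R) :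
    (A *ᵥ v) ⬝ᵥ (A *ᵥ v) = v ⬝ᵥ v := by
  rw [dotProduct_mulVec, vecMul_mulVec, hA, vecMul_one]

theorem Equiv.Perm.eq_one_of_forall_apply_le {n : ℕ} {σ : Equiv.Perm (Fin n)}
    (h : ∀ i, σ i ≤ i) : σ = 1 := by
  have hsum : ∑ i, (σ i : ℕ) = ∑ i : Fin n, (i : ℕ) := Equiv.sum_comp σ (fun i => (i : ℕ))
  have hle : ∀ i ∈ Finset.univ, (σ i : ℕ) ≤ i := fun i _ => h i
  ext i
  exact (Finset.sum_eq_sum_iff_of_le hle).mp hsum i (Finset.mem_univ i)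

theorem Matrix.eq_one_of_row_zero_of_row_one {R : Type*} [CommRing R]
    {φ : Matrix (Fin 3) (Fin 3) R} (hφ : φ * φᵀ = 1) (hdet : φ.det = 1)
    (h0 : φ 0 = (1 : Matrix (Fin 3) (Fin 3) R) 0) (h1 : φ 1 = (1 : Matrix (Fin 3) (Fin 3) R) 1) :
    φ = 1 := by
  have e20 : φ 2 0 = 0 := by
    simpa [mul_apply, Fin.sum_univ_three, h0] using congrFun (congrFun hφ 2) 0
  have e21 : φ 2 1 = 0 := by
    simpa [mul_apply, Fin.sum_univ_three, h1] using congrFun (congrFun hφ 2) 1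
  have e22 : φ 2 2 = 1 := by simpa [det_fin_three, h0, h1, e20, e21] using hdet
  ext i j
  fin_cases i <;> fin_cases j <;> simp [h0, h1, e20, e21, e22]

def tetra : Fin 4 → Fin 3 → ℝ := ![![1, 0, 0], ![1, 1, 0], ![2, 1, 2], ![4, -2, -2]]

def projZ (x : Fin 3 → ℝ) : Fin 2 → ℝ := ![x 0, x 1]

theorem projZ_dotProduct_self_le (x : Fin 3 → ℝ) : projZ x ⬝ᵥ projZ x ≤ x ⬝ᵥ x := by
  simp only [projZ, dotProduct, Fin.sum_univ_two, Fin.sum_univ_three, cons_val_zero, cons_val_one]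
  nlinarith [mul_self_nonneg (x 2)]

theorem le_of_projZ_tetra_dotProduct_le {i j : Fin 4}
    (h : projZ (tetra j) ⬝ᵥ projZ (tetra j) ≤ tetra i ⬝ᵥ tetra i) : j ≤ i := by
  revert h
  fin_cases i <;> fin_cases j <;>
    norm_num [Fin.le_def, tetra, projZ, dotProduct, Fin.sum_univ_two, Fin.sum_univ_three,
      cons_val_two]

theorem perm_eq_one_of_projZ_mulVec_tetra {φ : Matrix (Fin 3) (Fin 3) ℝ} (hφ : φᵀ * φ = 1)
    {σ : Equiv.Perm (Fin 4)} (h : ∀ i, projZ (φ *ᵥ tetra i) = projZ (tetra (σ i))) : σ = 1 :=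
  Equiv.Perm.eq_one_of_forall_apply_le fun i => le_of_projZ_tetra_dotProduct_le <| by
    calc projZ (tetra (σ i)) ⬝ᵥ projZ (tetra (σ i))
        = projZ (φ *ᵥ tetra i) ⬝ᵥ projZ (φ *ᵥ tetra i) := by rw [h]
      _ ≤ (φ *ᵥ tetra i) ⬝ᵥ (φ *ᵥ tetra i) := projZ_dotProduct_self_le _
      _ = tetra i ⬝ᵥ tetra i := mulVec_dotProduct_mulVec_self hφ _

theorem eq_of_dotProduct_tetra_eq {r s : Fin 3 → ℝ} (h : ∀ i, r ⬝ᵥ tetra i = s ⬝ᵥ tetra i) :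
    r = s := by
  have h0 := h 0
  have h1 := h 1
  have h2 := h 2
  simp only [tetra, dotProduct, Fin.sum_univ_three, cons_val_zero, cons_val_one, cons_val_two,
    head_cons, tail_cons] at h0 h1 h2
  ext j
  fin_cases j <;> simp only [Fin.zero_eta, Fin.mk_one, Fin.reduceFinMk] <;> linarith

theorem row_eq_of_projZ_mulVec_tetra {φ : Matrix (Fin 3) (Fin 3) ℝ}
    (h : ∀ i, projZ (φ *ᵥ tetra i) = projZ (tetra i)) {k : Fin 3} (hk : k ≠ 2) :
    φ k = (1 : Matrix (Fin 3) (Fin 3) ℝ) k := by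
  refine eq_of_dotProduct_tetra_eq fun i => ?_
  change (φ *ᵥ tetra i) k = ((1 : Matrix (Fin 3) (Fin 3) ℝ) *ᵥ tetra i) k
  rw [one_mulVec]
  fin_cases k
  · exact congrFun (h i) 0
  · exact congrFun (h i) 1
  · exact absurd rfl hk

/-- For the specific tetrahedron p¹ = (1,0,0), p² = (1,1,0), p³ = (2,1,2),
p⁴ = (4,−2,−2), any rotation φ ∈ SO(3) and permutation σ with π_z φ p⁽ⁱ⁾ = π_z p⁽σ(i)⁾
must satisfy σ = id and φ = id. -/
theorem stmt16 :
    let p : Fin 4 → (Fin 3 → ℝ) :=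
      ![![1, 0, 0], ![1, 1, 0], ![2, 1, 2], ![4, -2, -2]]
    let πz : (Fin 3 → ℝ) → (Fin 2 → ℝ) := fun x => ![x 0, x 1]
    ∀ (φ : Matrix (Fin 3) (Fin 3) ℝ), φ.transpose * φ = 1 → φ.det = 1 →
      ∀ σ : Equiv.Perm (Fin 4),
        (∀ i : Fin 4, πz (φ.mulVec (p i)) = πz (p (σ i))) →
        σ = 1 ∧ φ = 1 := by
  intro p πz φ hO hdet σ hσ
  obtain rfl : σ = 1 := perm_eq_one_of_projZ_mulVec_tetra hO hσ
  refine ⟨rfl, eq_one_of_row_zero_of_row_one (mul_eq_one_comm.mp hO) hdet ?_ ?_⟩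
  · exact row_eq_of_projZ_mulVec_tetra hσ (by decide)
  · exact row_eq_of_projZ_mulVec_tetra hσ (by decide)
end
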